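/- arXiv:1609.03198 — 2 statements merged into one kernel-verified Lean document; each statement's English description precedes it below -/
import Mathlib

section
/- (Improper Integrals Lemma) Suppose f:[a,b]→ℝ is measurable. If f·χ_{[c,b]} ∈ Den[a,b] for every c ∈ (a,b), then f ∈ Den[a,b] with Denjoy integral ∫_a^b f = L if and only if lim_{c→a⁺} ∫_c^b f exists and equals L. Likewise, if f·χ_{[a,c]} ∈ Den[a,b] for every c ∈ (a,b), then f ∈ Den[a,b] with ∫_a^b f = L if and only if lim_{c→b⁻} ∫_a^c f exists and equals L. -/
open MeasureTheory Set Filter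

noncomputable section

attribute [local instance] Classical.propDecidable

/-- The oscillation `ω(F, J)` of `F` on the set `J`. -/
def osc (F : ℝ → ℝ) (J : Set ℝ) : ℝ :=
  sSup {d : ℝ | ∃ x ∈ J, ∃ y ∈ J, d = |F x - F y|}

/-- `D` is a `K`-edged pre-partition of `[a,b]`: a finite nonempty collection of
pairwise non-overlapping closed subintervals of `[a,b]` whose endpoints lie in `K`. -/
def IsPrePartition (a b : ℝ) (K : Set ℝ) (D : Finset (ℝ × ℝ)) : Prop :=
  D.Nonempty ∧
  (∀ p ∈ D, p.1 ≤ p.2 ∧ p.1 ∈ K ∧ p.2 ∈ K ∧ Icc p.1 p.2 ⊆ Icc a b) ∧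
  (D : Set (ℝ × ℝ)).Pairwise fun p q => p.2 ≤ q.1 ∨ q.2 ≤ p.1

/-- `F ∈ AC_*(K)`: absolute continuity in the restricted sense on `K`. -/
def ACStar (a b : ℝ) (F : ℝ → ℝ) (K : Set ℝ) : Prop :=
  ∀ ε > (0:ℝ), ∃ δ > (0:ℝ), ∀ D : Finset (ℝ × ℝ), IsPrePartition a b K D →
    (∑ p ∈ D, (p.2 - p.1)) < δ → (∑ p ∈ D, osc F (Icc p.1 p.2)) < ε

/-- `F ∈ ACG_*(K)`: `K` is a countable union of closed sets `Kₙ ⊆ [a,b]` with `F ∈ AC_*(Kₙ)`. -/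
def ACGStar (a b : ℝ) (F : ℝ → ℝ) (K : Set ℝ) : Prop :=
  ∃ C : ℕ → Set ℝ, (∀ n, IsClosed (C n) ∧ C n ⊆ Icc a b ∧ ACStar a b F (C n)) ∧
    K = ⋃ n, C n

/-- `F` is the indefinite Denjoy integral of `f` on `[a,b]`:
`F` is continuous on `[a,b]`, `F(a) = 0`, `F ∈ ACG_*([a,b])`, and `F' = f` a.e. on `[a,b]`. -/
def HasDenjoyIntegralFn (a b : ℝ) (f F : ℝ → ℝ) : Prop :=
  ContinuousOn F (Icc a b) ∧ F a = 0 ∧ ACGStar a b F (Icc a b) ∧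
    ∀ᵐ x ∂(volume.restrict (Icc a b)), HasDerivAt F (f x) x

/-- `f ∈ Den[a,b]`: `f` is Denjoy integrable on `[a,b]`. -/
def DenjoyIntegrable (a b : ℝ) (f : ℝ → ℝ) : Prop :=
  ∃ F : ℝ → ℝ, HasDenjoyIntegralFn a b f F

/-- The Denjoy integral `∫_a^b f` (junk value `0` if `f` is not Denjoy integrable). -/
def denjoyIntegral (a b : ℝ) (f : ℝ → ℝ) : ℝ :=
  if h : DenjoyIntegrable a b f then Classical.choose h b else 0

/-!
Given primitives `F_c` of `f` on the intervals `[c, b]`, the function `G x = L - ∫_x^b f` differs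
from each `F_c` by a constant on `[c, b]`, so it is `ACG*` on `{a} ∪ ⋃ₙ [cₙ, b]` with `G' = f` a.e.,
and the limit hypothesis says exactly that `G` is continuous at `a`; conversely a primitive is
continuous at `a`. Both directions rest on `∫_c^d f = F d - F c` for every primitive `F`, i.e. on
uniqueness of primitives: an `ACG*` function with derivative `0` a.e. maps `[a, b]` onto a null set
(Luzin's condition (N) together with the area formula), hence is constant. The statement at `b` is
the one at `a` for `x ↦ f (-x)`.
-/

open scoped Topology

section Osc

variable {F G : ℝ → ℝ} {J : Set ℝ}

lemma bddAbove_abs_sub_of_continuousOn (hJ : IsCompact J) (hF : ContinuousOn F J) :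
    BddAbove {d : ℝ | ∃ x ∈ J, ∃ y ∈ J, d = |F x - F y|} := by
  obtain ⟨M, hM⟩ := hJ.exists_bound_of_continuousOn hF
  refine ⟨2 * M, ?_⟩
  rintro d ⟨x, hx, y, hy, rfl⟩
  calc |F x - F y| ≤ |F x| + |F y| := abs_sub _ _
    _ ≤ 2 * M := by linarith [hM x hx, hM y hy, Real.norm_eq_abs (F x), Real.norm_eq_abs (F y)]

lemma abs_sub_le_osc (hJ : IsCompact J) (hF : ContinuousOn F J) {x y : ℝ} (hx : x ∈ J)
    (hy : y ∈ J) : |F x - F y| ≤ osc F J :=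
  le_csSup (bddAbove_abs_sub_of_continuousOn hJ hF) ⟨x, hx, y, hy, rfl⟩

lemma osc_nonneg (hJ : IsCompact J) (hF : ContinuousOn F J) (hne : J.Nonempty) :
    0 ≤ osc F J := by
  obtain ⟨x, hx⟩ := hne
  simpa using abs_sub_le_osc hJ hF hx hx

lemma osc_le {M : ℝ} (hne : J.Nonempty) (h : ∀ x ∈ J, ∀ y ∈ J, |F x - F y| ≤ M) :
    osc F J ≤ M := by
  obtain ⟨x, hx⟩ := hne
  refine csSup_le ⟨0, x, hx, x, hx, by simp⟩ ?_
  rintro d ⟨x, hx, y, hy, rfl⟩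
  exact h x hx y hy

lemma osc_sub_le (hJ : IsCompact J) (hF : ContinuousOn F J) (hG : ContinuousOn G J)
    (hne : J.Nonempty) :
    osc (fun x => F x - G x) J ≤ osc F J + osc G J := by
  refine osc_le hne fun x hx y hy => ?_
  calc |(F x - G x) - (F y - G y)| = |(F x - F y) + (G y - G x)| := by ring_nf
    _ ≤ |F x - F y| + |G y - G x| := abs_add_le _ _
    _ ≤ osc F J + osc G J :=
      add_le_add (abs_sub_le_osc hJ hF hx hy) (abs_sub_le_osc hJ hG hy hx)

lemma osc_congr (h : ∀ x ∈ J, ∀ y ∈ J, |G x - G y| = |F x - F y|) : osc G J = osc F J := by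
  unfold osc
  congr 1
  ext d
  constructor <;> rintro ⟨x, hx, y, hy, rfl⟩ <;> exact ⟨x, hx, y, hy, by rw [h x hx y hy]⟩

lemma osc_comp (F g : ℝ → ℝ) (s : Set ℝ) : osc (F ∘ g) s = osc F (g '' s) := by
  simp only [osc, Set.exists_mem_image, Function.comp_apply]

lemma volume_image_Icc_le_osc {c d : ℝ} (hcd : c ≤ d) (hF : ContinuousOn F (Icc c d)) :
    volume (F '' Icc c d) ≤ ENNReal.ofReal (osc F (Icc c d)) := by
  obtain ⟨xM, hxM, hmax⟩ := isCompact_Icc.exists_isMaxOn (nonempty_Icc.2 hcd) hF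
  obtain ⟨xm, hxm, hmin⟩ := isCompact_Icc.exists_isMinOn (nonempty_Icc.2 hcd) hF
  calc volume (F '' Icc c d) ≤ volume (Icc (F xm) (F xM)) :=
        measure_mono (image_subset_iff.2 fun t ht => ⟨hmin ht, hmax ht⟩)
    _ = ENNReal.ofReal (F xM - F xm) := Real.volume_Icc
    _ ≤ ENNReal.ofReal (osc F (Icc c d)) :=
        ENNReal.ofReal_le_ofReal ((le_abs_self _).trans (abs_sub_le_osc isCompact_Icc hF hxM hxm))

end Osc

section ACStar

variable {a b c d : ℝ} {F G : ℝ → ℝ} {K L : Set ℝ}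

lemma isPrePartition_iff_of_subset {D : Finset (ℝ × ℝ)} (hK : K ⊆ Icc a b)
    (hK' : K ⊆ Icc c d) : IsPrePartition a b K D ↔ IsPrePartition c d K D := by
  have hsub : ∀ {a b}, K ⊆ Icc a b → ∀ p : ℝ × ℝ, p.2 ∈ K → p.1 ∈ K → Icc p.1 p.2 ⊆ Icc a b :=
    fun hK p h2 h1 => Icc_subset_Icc (hK h1).1 (hK h2).2
  simp only [IsPrePartition]
  constructor <;> rintro ⟨hne, hD, hdisj⟩ <;> refine ⟨hne, fun p hp => ?_, hdisj⟩ <;>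
    obtain ⟨hle, h1, h2, -⟩ := hD p hp
  exacts [⟨hle, h1, h2, hsub hK' p h2 h1⟩, ⟨hle, h1, h2, hsub hK p h2 h1⟩]

lemma acStar_iff_of_subset (hK : K ⊆ Icc a b) (hK' : K ⊆ Icc c d) :
    ACStar a b F K ↔ ACStar c d F K := by
  simp only [ACStar, isPrePartition_iff_of_subset hK hK']

lemma ACStar.mono (h : ACStar a b F K) (hLK : L ⊆ K) : ACStar a b F L := by
  intro ε hε
  obtain ⟨δ, hδ, hD⟩ := h ε hε
  refine ⟨δ, hδ, fun D ⟨hne, hDL, hdisj⟩ => hD D ⟨hne, fun p hp => ?_, hdisj⟩⟩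
  obtain ⟨hle, h1, h2, hsub⟩ := hDL p hp
  exact ⟨hle, hLK h1, hLK h2, hsub⟩

lemma ACStar.of_abs_sub_eq (h : ACStar a b F K)
    (hFG : ∀ x ∈ Icc a b, ∀ y ∈ Icc a b, |G x - G y| = |F x - F y|) : ACStar a b G K := by
  intro ε hε
  obtain ⟨δ, hδ, hD⟩ := h ε hε
  refine ⟨δ, hδ, fun D hpre hlen => ?_⟩
  rw [Finset.sum_congr rfl fun p hp => osc_congr fun x hx y hy =>
    hFG x ((hpre.2.1 p hp).2.2.2 hx) y ((hpre.2.1 p hp).2.2.2 hy)]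
  exact hD D hpre hlen

lemma ACStar.sub (hF : ACStar a b F K) (hG : ACStar a b G K) (hFc : ContinuousOn F (Icc a b))
    (hGc : ContinuousOn G (Icc a b)) : ACStar a b (fun x => F x - G x) K := by
  intro ε hε
  obtain ⟨δ₁, hδ₁, hD₁⟩ := hF (ε / 2) (half_pos hε)
  obtain ⟨δ₂, hδ₂, hD₂⟩ := hG (ε / 2) (half_pos hε)
  refine ⟨min δ₁ δ₂, lt_min hδ₁ hδ₂, fun D hpre hlen => ?_⟩
  calc ∑ p ∈ D, osc (fun x => F x - G x) (Icc p.1 p.2)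
      ≤ ∑ p ∈ D, (osc F (Icc p.1 p.2) + osc G (Icc p.1 p.2)) := by
        refine Finset.sum_le_sum fun p hp => ?_
        obtain ⟨hle, -, -, hsub⟩ := hpre.2.1 p hp
        exact osc_sub_le isCompact_Icc (hFc.mono hsub) (hGc.mono hsub) (nonempty_Icc.2 hle)
    _ < ε / 2 + ε / 2 := by
        rw [Finset.sum_add_distrib]
        exact add_lt_add (hD₁ D hpre (hlen.trans_le (min_le_left _ _)))
          (hD₂ D hpre (hlen.trans_le (min_le_right _ _)))
    _ = ε := add_halves ε

lemma acStar_singleton (a b x : ℝ) (F : ℝ → ℝ) : ACStar a b F {x} := by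
  refine fun ε hε => ⟨1, one_pos, fun D hpre _ => ?_⟩
  refine (Finset.sum_nonpos fun p hp => osc_le (nonempty_Icc.2 (hpre.2.1 p hp).1) ?_).trans_lt hε
  obtain ⟨-, h1, h2, -⟩ := hpre.2.1 p hp
  rw [mem_singleton_iff.1 h1, mem_singleton_iff.1 h2, Icc_self]
  rintro u rfl v rfl
  simp

lemma IsPrePartition.image_neg {D : Finset (ℝ × ℝ)} (h : IsPrePartition a b K D) :
    IsPrePartition (-b) (-a) (-K) (D.image fun p => (-p).swap) := by
  obtain ⟨hne, hD, hdisj⟩ := h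
  refine ⟨hne.image _, ?_, ?_⟩
  · simp only [Finset.mem_image, forall_exists_index, and_imp]
    rintro _ p hp rfl
    obtain ⟨hle, h1, h2, hsub⟩ := hD p hp
    refine ⟨neg_le_neg hle, by simpa using h2, by simpa using h1, ?_⟩
    simpa [← neg_Icc] using hsub
  · simp only [Finset.coe_image]
    rintro _ ⟨p, hp, rfl⟩ _ ⟨q, hq, rfl⟩ hpq
    have := hdisj hp hq (fun h => hpq (h ▸ rfl))
    simp only [Prod.snd_swap, Prod.fst_swap, Prod.snd_neg, Prod.fst_neg, neg_le_neg_iff]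
    exact this.symm

lemma ACStar.comp_neg (h : ACStar a b F K) : ACStar (-b) (-a) (fun x => F (-x)) (-K) := by
  intro ε hε
  obtain ⟨δ, hδ, hD⟩ := h ε hε
  refine ⟨δ, hδ, fun D hpre hlen => ?_⟩
  have hinj : InjOn (fun p : ℝ × ℝ => (-p).swap) D :=
    (Prod.swap_injective.comp neg_injective).injOn
  have hpre' := hpre.image_neg
  simp only [neg_neg] at hpre'
  have hosc := hD _ hpre' <| by
    rw [Finset.sum_image hinj]
    simpa [sub_eq_add_neg, add_comm] using hlen
  rw [Finset.sum_image hinj] at hosc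
  convert hosc using 2 with p
  simp only [Prod.fst_swap, Prod.snd_swap, Prod.fst_neg, Prod.snd_neg, ← image_neg_Icc,
    ← osc_comp]
  rfl

end ACStar

section ACGStar

variable {a b c d : ℝ} {F G : ℝ → ℝ} {K : Set ℝ}

lemma ACStar.acgStar (h : ACStar a b F K) (hK : IsClosed K) (hKab : K ⊆ Icc a b) :
    ACGStar a b F K :=
  ⟨fun _ => K, fun _ => ⟨hK, hKab, h⟩, (iUnion_const K).symm⟩

lemma acgStar_iUnion {ι : Type*} [Countable ι] [Nonempty ι] {K : ι → Set ℝ}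
    (h : ∀ i, ACGStar a b F (K i)) : ACGStar a b F (⋃ i, K i) := by
  choose C hC hKC using h
  obtain ⟨e, he⟩ := exists_surjective_nat (ι × ℕ)
  refine ⟨fun k => C (e k).1 (e k).2, fun k => hC _ _, ?_⟩
  rw [he.iUnion_comp (fun p => C p.1 p.2), iUnion_prod']
  exact iUnion_congr hKC

lemma ACGStar.union {K' : Set ℝ} (h : ACGStar a b F K) (h' : ACGStar a b F K') :
    ACGStar a b F (K ∪ K') := by
  rw [union_eq_iUnion]
  exact acgStar_iUnion fun i => by cases i <;> assumption

lemma ACGStar.of_abs_sub_eq (h : ACGStar c d F K) (hac : a ≤ c) (hdb : d ≤ b)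
    (hFG : ∀ x ∈ Icc c d, ∀ y ∈ Icc c d, |G x - G y| = |F x - F y|) : ACGStar a b G K := by
  obtain ⟨C, hC, rfl⟩ := h
  refine ⟨C, fun n => ?_, rfl⟩
  obtain ⟨hcl, hsub, hAC⟩ := hC n
  have hsub' := hsub.trans (Icc_subset_Icc hac hdb)
  exact ⟨hcl, hsub', (acStar_iff_of_subset hsub' hsub).2 (hAC.of_abs_sub_eq hFG)⟩

lemma ACGStar.sub (hF : ACGStar a b F K) (hG : ACGStar a b G K)
    (hFc : ContinuousOn F (Icc a b)) (hGc : ContinuousOn G (Icc a b)) :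
    ACGStar a b (fun x => F x - G x) K := by
  obtain ⟨C, hC, hKC⟩ := hF
  obtain ⟨C', hC', hKC'⟩ := hG
  have hK : K = ⋃ m, ⋃ n, C m ∩ C' n := by rw [← iUnion_inter_iUnion, ← hKC, ← hKC', inter_self]
  rw [hK]
  refine acgStar_iUnion fun m => acgStar_iUnion fun n => ?_
  obtain ⟨hcl, hsub, hAC⟩ := hC m
  obtain ⟨hcl', -, hAC'⟩ := hC' n
  exact ((hAC.mono inter_subset_left).sub (hAC'.mono inter_subset_right) hFc hGc).acgStar
    (hcl.inter hcl') (inter_subset_left.trans hsub)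

lemma ACGStar.comp_neg (h : ACGStar a b F K) :
    ACGStar (-b) (-a) (fun x => F (-x)) (-K) := by
  obtain ⟨C, hC, rfl⟩ := h
  refine ⟨fun n => -C n, fun n => ?_, iUnion_neg C⟩
  obtain ⟨hcl, hsub, hAC⟩ := hC n
  exact ⟨hcl.neg, by simpa [neg_subset] using hsub, hAC.comp_neg⟩

end ACGStar

lemma Set.OrdConnected.lt_of_disjoint {α : Type*} [LinearOrder α] {s t : Set α}
    (hs : s.OrdConnected) (ht : t.OrdConnected) (hst : Disjoint s t) {x₀ y₀ x y : α}
    (hx₀ : x₀ ∈ s) (hy₀ : y₀ ∈ t) (h₀ : x₀ < y₀) (hx : x ∈ s) (hy : y ∈ t) : x < y := by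
  by_contra! hyx
  rcases le_or_gt y x₀ with h | h
  · exact hst.ne_of_mem hx₀ (ht.out hy hy₀ ⟨h, h₀.le⟩) rfl
  · exact hst.ne_of_mem (hs.out hx₀ hx ⟨h.le, hyx⟩) hy rfl

/-- Each connected component `V` of `U` meeting `K` contributes the interval
`[inf (K ∩ V), sup (K ∩ V)]`. -/
lemma exists_countable_nonoverlapping_Icc_cover {K U : Set ℝ} (hK : IsClosed K)
    (hKb : BddBelow K) (hKa : BddAbove K) (hU : IsOpen U) :
    ∃ P : Set (ℝ × ℝ), P.Countable ∧
      (∀ p ∈ P, p.1 ≤ p.2 ∧ p.1 ∈ K ∧ p.2 ∈ K ∧ Ioo p.1 p.2 ⊆ U) ∧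
      P.Pairwise (fun p q => p.2 ≤ q.1 ∨ q.2 ≤ p.1) ∧ K ∩ U ⊆ ⋃ p ∈ P, Icc p.1 p.2 := by
  set V : ℝ → Set ℝ := fun x => connectedComponentIn U x
  set I : ℝ → ℝ × ℝ := fun x => (sInf (K ∩ V x), sSup (K ∩ V x))
  have hVord : ∀ x, (V x).OrdConnected := fun x => isPreconnected_connectedComponentIn.ordConnected
  have hne : ∀ x ∈ K ∩ U, (K ∩ V x).Nonempty :=
    fun x hx => ⟨x, hx.1, mem_connectedComponentIn hx.2⟩
  have hbdd : ∀ x, BddBelow (K ∩ V x) ∧ BddAbove (K ∩ V x) :=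
    fun x => ⟨hKb.mono inter_subset_left, hKa.mono inter_subset_left⟩
  have hcl : ∀ x, closure (K ∩ V x) ⊆ K := fun x => closure_minimal inter_subset_left hK
  have hsep : ∀ x ∈ K ∩ U, ∀ y ∈ K ∩ U, V x ≠ V y → x < y → (I x).2 ≤ (I y).1 := by
    intro x hx y hy hV hxy
    have hdisj : Disjoint (V x) (V y) :=
      disjoint_left.2 fun z hzx hzy =>
        hV ((connectedComponentIn_eq hzx).trans (connectedComponentIn_eq hzy).symm)
    refine csSup_le (hne x hx) fun v hv => le_csInf (hne y hy) fun w hw => ?_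
    exact ((hVord x).lt_of_disjoint (hVord y) hdisj (mem_connectedComponentIn hx.2)
      (mem_connectedComponentIn hy.2) hxy hv.2 hw.2).le
  refine ⟨I '' (K ∩ U), ?_, ?_, ?_, ?_⟩
  · refine (countable_range fun q : ℚ => I q).mono ?_
    rintro _ ⟨x, hx, rfl⟩
    obtain ⟨q, hq⟩ := Rat.denseRange_cast.exists_mem_open hU.connectedComponentIn
      ⟨x, mem_connectedComponentIn hx.2⟩
    exact ⟨q, by simp only [I, V, ← connectedComponentIn_eq hq]⟩
  · rintro _ ⟨x, hx, rfl⟩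
    refine ⟨csInf_le_csSup (hne x hx) (hbdd x).1 (hbdd x).2,
      hcl x (csInf_mem_closure (hne x hx) (hbdd x).1),
      hcl x (csSup_mem_closure (hne x hx) (hbdd x).2), fun z hz => ?_⟩
    obtain ⟨v, hv, hvz⟩ := exists_lt_of_csInf_lt (hne x hx) hz.1
    obtain ⟨w, hw, hzw⟩ := exists_lt_of_lt_csSup (hne x hx) hz.2
    exact connectedComponentIn_subset U x ((hVord x).out hv.2 hw.2 ⟨hvz.le, hzw.le⟩)
  · rintro _ ⟨x, hx, rfl⟩ _ ⟨y, hy, rfl⟩ hIxy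
    have hV : V x ≠ V y := fun h => hIxy (by simp only [I, h])
    rcases lt_or_gt_of_ne (fun h : x = y => hV (h ▸ rfl)) with hxy | hyx
    · exact Or.inl (hsep x hx y hy hV hxy)
    · exact Or.inr (hsep y hy x hx hV.symm hyx)
  · intro x hx
    have hxV : x ∈ K ∩ V x := ⟨hx.1, mem_connectedComponentIn hx.2⟩
    exact mem_biUnion (mem_image_of_mem I hx) ⟨csInf_le (hbdd x).1 hxV, le_csSup (hbdd x).2 hxV⟩

lemma ofReal_sum_sub_le_volume {D : Finset (ℝ × ℝ)} {U : Set ℝ} (hle : ∀ p ∈ D, p.1 ≤ p.2)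
    (hU : ∀ p ∈ D, Ioo p.1 p.2 ⊆ U)
    (hdisj : (D : Set (ℝ × ℝ)).Pairwise fun p q => p.2 ≤ q.1 ∨ q.2 ≤ p.1) :
    ENNReal.ofReal (∑ p ∈ D, (p.2 - p.1)) ≤ volume U := by
  have hIoo : (D : Set (ℝ × ℝ)).PairwiseDisjoint fun p => Ioo p.1 p.2 := fun p hp q hq hpq =>
    disjoint_left.2 fun z hz hz' => (hdisj hp hq hpq).elim (fun h => (hz.2.trans_le h).not_gt hz'.1)
      fun h => (hz'.2.trans_le h).not_gt hz.1
  calc ENNReal.ofReal (∑ p ∈ D, (p.2 - p.1)) = ∑ p ∈ D, volume (Ioo p.1 p.2) := by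
        rw [ENNReal.ofReal_sum_of_nonneg fun p hp => sub_nonneg.2 (hle p hp)]
        simp only [Real.volume_Ioo]
    _ = volume (⋃ p ∈ D, Ioo p.1 p.2) :=
        (measure_biUnion_finset hIoo fun _ _ => measurableSet_Ioo).symm
    _ ≤ volume U := measure_mono (iUnion₂_subset hU)

lemma IsPrePartition.sum_volume_image_le {a b : ℝ} {K : Set ℝ} {F : ℝ → ℝ}
    {D : Finset (ℝ × ℝ)} (hD : IsPrePartition a b K D) (hF : ContinuousOn F (Icc a b)) :
    ∑ p ∈ D, volume (F '' Icc p.1 p.2) ≤ ENNReal.ofReal (∑ p ∈ D, osc F (Icc p.1 p.2)) := by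
  have hcont : ∀ p ∈ D, ContinuousOn F (Icc p.1 p.2) := fun p hp => hF.mono (hD.2.1 p hp).2.2.2
  rw [ENNReal.ofReal_sum_of_nonneg fun p hp =>
    osc_nonneg isCompact_Icc (hcont p hp) (nonempty_Icc.2 (hD.2.1 p hp).1)]
  exact Finset.sum_le_sum fun p hp => volume_image_Icc_le_osc (hD.2.1 p hp).1 (hcont p hp)

/-- Luzin's condition (N) for `AC*` functions on closed sets. -/
theorem ACStar.volume_image_eq_zero {a b : ℝ} {F : ℝ → ℝ} {K E : Set ℝ} (hAC : ACStar a b F K)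
    (hK : IsClosed K) (hKab : K ⊆ Icc a b) (hF : ContinuousOn F (Icc a b)) (hEK : E ⊆ K)
    (hE : volume E = 0) : volume (F '' E) = 0 := by
  refine le_antisymm (ENNReal.le_of_forall_pos_le_add fun ε hε _ => ?_) bot_le
  obtain ⟨δ, hδ, hACδ⟩ := hAC ε hε
  obtain ⟨U, hEU, hU, hUδ⟩ := exists_isOpen_lt_of_lt E (ENNReal.ofReal δ)
    (hE ▸ ENNReal.ofReal_pos.2 hδ)
  obtain ⟨P, hPc, hP, hPdisj, hPcov⟩ := exists_countable_nonoverlapping_Icc_cover hK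
    (bddBelow_Icc.mono hKab) (bddAbove_Icc.mono hKab) hU
  have hfin : ∀ D : Finset (ℝ × ℝ), ↑D ⊆ P →
      ∑ p ∈ D, volume (F '' Icc p.1 p.2) ≤ ENNReal.ofReal ε := by
    intro D hDP
    rcases D.eq_empty_or_nonempty with rfl | hne
    · simp
    have hpre : IsPrePartition a b K D := by
      refine ⟨hne, fun p hp => ?_, hPdisj.mono hDP⟩
      obtain ⟨hle, h1, h2, -⟩ := hP p (hDP hp)
      exact ⟨hle, h1, h2, Icc_subset_Icc (hKab h1).1 (hKab h2).2⟩
    refine (hpre.sum_volume_image_le hF).trans (ENNReal.ofReal_le_ofReal (hACδ D hpre ?_).le)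
    have hlen := ofReal_sum_sub_le_volume (fun p hp => (hP p (hDP hp)).1)
      (fun p hp => (hP p (hDP hp)).2.2.2) (hPdisj.mono hDP)
    exact (ENNReal.ofReal_lt_ofReal_iff hδ).1 (hlen.trans_lt hUδ)
  calc volume (F '' E) ≤ volume (⋃ p ∈ P, F '' Icc p.1 p.2) := by
        rw [← image_iUnion₂]
        exact measure_mono (image_mono fun x hx => hPcov ⟨hEK hx, hEU hx⟩)
    _ ≤ ∑' p : P, volume (F '' Icc p.1.1 p.1.2) := measure_biUnion_le _ hPc _
    _ ≤ ENNReal.ofReal ε := by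
        refine ENNReal.summable.tsum_le_of_sum_le fun s => ?_
        have := hfin (s.map (Function.Embedding.subtype _)) (by simp [Finset.coe_map])
        rwa [Finset.sum_map] at this
    _ = 0 + ε := by simp

theorem ACGStar.volume_image_eq_zero {a b : ℝ} {F : ℝ → ℝ} {K E : Set ℝ} (h : ACGStar a b F K)
    (hF : ContinuousOn F (Icc a b)) (hEK : E ⊆ K) (hE : volume E = 0) : volume (F '' E) = 0 := by
  obtain ⟨C, hC, rfl⟩ := h
  have hsub : F '' E ⊆ ⋃ n, F '' (E ∩ C n) := by
    rw [← image_iUnion, ← inter_iUnion]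
    exact image_mono (subset_inter subset_rfl hEK)
  refine measure_mono_null hsub (measure_iUnion_null fun n => ?_)
  obtain ⟨hcl, hsub, hAC⟩ := hC n
  exact hAC.volume_image_eq_zero hcl hsub hF inter_subset_right
    (measure_mono_null inter_subset_left hE)

lemma volume_image_eq_zero_of_hasDerivWithinAt_zero {s : Set ℝ} {F : ℝ → ℝ}
    (h : ∀ x ∈ s, HasDerivWithinAt F 0 s x) : volume (F '' s) = 0 :=
  addHaar_image_eq_zero_of_det_fderivWithin_eq_zero volume (f' := fun _ => 0)
    (fun x hx => by simpa using (h x hx).hasFDerivWithinAt) (by simp)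

lemma eq_of_volume_image_Icc_eq_zero {a b x y : ℝ} {F : ℝ → ℝ} (hF : ContinuousOn F (Icc a b))
    (h₀ : volume (F '' Icc a b) = 0) (hx : x ∈ Icc a b) (hy : y ∈ Icc a b) : F x = F y := by
  have hsub : uIcc (F x) (F y) ⊆ F '' Icc a b :=
    (isPreconnected_Icc.image F hF).ordConnected.uIcc_subset (mem_image_of_mem F hx)
      (mem_image_of_mem F hy)
  have := measure_mono_null hsub h₀
  rw [Real.volume_interval, ENNReal.ofReal_eq_zero, abs_nonpos_iff, sub_eq_zero] at this
  exact this.symm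

/-- The image of `[a, b]` is null: where `F' = 0` by the area formula, and on the remaining null
set by Luzin's condition (N). -/
theorem ACGStar.eq_of_ae_hasDerivAt_zero {a b x y : ℝ} {F : ℝ → ℝ}
    (hACG : ACGStar a b F (Icc a b)) (hF : ContinuousOn F (Icc a b))
    (hd : ∀ᵐ z ∂volume.restrict (Icc a b), HasDerivAt F 0 z) (hx : x ∈ Icc a b)
    (hy : y ∈ Icc a b) : F x = F y := by
  set N := {z ∈ Icc a b | ¬ HasDerivAt F 0 z}
  have hN : volume N = 0 := by
    rw [ae_restrict_iff' measurableSet_Icc, ae_iff] at hd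
    simpa [N, and_assoc] using hd
  have h₁ : volume (F '' (Icc a b \ N)) = 0 :=
    volume_image_eq_zero_of_hasDerivWithinAt_zero fun z hz =>
      (not_not.1 fun h => hz.2 ⟨hz.1, h⟩ : HasDerivAt F 0 z).hasDerivWithinAt
  have h₂ : volume (F '' N) = 0 := hACG.volume_image_eq_zero hF (sep_subset _ _) hN
  have h₀ : volume (F '' Icc a b) = 0 := by
    refine measure_mono_null ?_ (measure_union_null h₁ h₂)
    rw [← image_union, sdiff_union_of_subset (sep_subset _ _)]
  exact eq_of_volume_image_Icc_eq_zero hF h₀ hx hy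

namespace HasDenjoyIntegralFn

variable {a b c d : ℝ} {f F G : ℝ → ℝ}

theorem eqOn (hF : HasDenjoyIntegralFn a b f F) (hG : HasDenjoyIntegralFn a b f G) :
    EqOn F G (Icc a b) := by
  obtain ⟨hFc, hFa, hFacg, hFd⟩ := hF
  obtain ⟨hGc, hGa, hGacg, hGd⟩ := hG
  have hd : ∀ᵐ x ∂volume.restrict (Icc a b), HasDerivAt (fun x => F x - G x) 0 x := by
    filter_upwards [hFd, hGd] with x h₁ h₂
    rw [← sub_self (f x)]
    exact h₁.sub h₂
  intro x hx
  have := (hFacg.sub hGacg hFc hGc).eq_of_ae_hasDerivAt_zero (hFc.sub hGc) hd hx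
    (left_mem_Icc.2 (hx.1.trans hx.2))
  rwa [hFa, hGa, sub_zero, sub_eq_zero] at this

theorem congr (hF : HasDenjoyIntegralFn a b f F) (hab : a ≤ b) (h : EqOn F G (Icc a b)) :
    HasDenjoyIntegralFn a b f G := by
  obtain ⟨hFc, hFa, hFacg, hFd⟩ := hF
  refine ⟨hFc.congr h.symm, (h (left_mem_Icc.2 hab)).symm.trans hFa,
    hFacg.of_abs_sub_eq le_rfl le_rfl fun x hx y hy => by rw [h hx, h hy], ?_⟩
  rw [← Measure.restrict_congr_set Ioo_ae_eq_Icc] at hFd ⊢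
  filter_upwards [hFd, ae_restrict_mem measurableSet_Ioo] with x hx hxI
  exact hx.congr_of_eventuallyEq
    (eventuallyEq_of_mem (isOpen_Ioo.mem_nhds hxI) fun y hy => (h (Ioo_subset_Icc_self hy)).symm)

theorem restrict (hF : HasDenjoyIntegralFn a b f F) (hac : a ≤ c) (hdb : d ≤ b) :
    HasDenjoyIntegralFn c d f (fun x => F x - F c) := by
  obtain ⟨hFc, -, ⟨C, hC, hCab⟩, hFd⟩ := hF
  have hsub := Icc_subset_Icc hac hdb
  refine ⟨(hFc.mono hsub).sub continuousOn_const, sub_self _,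
    ⟨fun n => C n ∩ Icc c d, fun n => ?_, ?_⟩, ?_⟩
  · obtain ⟨hcl, hCn, hAC⟩ := hC n
    refine ⟨hcl.inter isClosed_Icc, inter_subset_right, ?_⟩
    refine ((acStar_iff_of_subset (inter_subset_left.trans hCn) inter_subset_right).1
      (hAC.mono inter_subset_left)).of_abs_sub_eq fun x _ y _ => ?_
    rw [sub_sub_sub_cancel_right]
  · rw [← iUnion_inter, ← hCab, inter_eq_self_of_subset_right hsub]
  · filter_upwards [ae_restrict_of_ae_restrict_of_subset hsub hFd] with x hx using hx.sub_const _

theorem denjoyIntegral_eq (hF : HasDenjoyIntegralFn a b f F) (hab : a ≤ b) :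
    denjoyIntegral a b f = F b := by
  have h : DenjoyIntegrable a b f := ⟨F, hF⟩
  rw [denjoyIntegral, dif_pos h]
  exact (Classical.choose_spec h).eqOn hF (right_mem_Icc.2 hab)

theorem denjoyIntegral_eq_sub (hF : HasDenjoyIntegralFn a b f F) (hac : a ≤ c) (hcd : c ≤ d)
    (hdb : d ≤ b) : denjoyIntegral c d f = F d - F c :=
  (hF.restrict hac hdb).denjoyIntegral_eq hcd

theorem comp_neg (hF : HasDenjoyIntegralFn a b f F) :
    HasDenjoyIntegralFn (-b) (-a) (fun x => f (-x)) (fun x => F b - F (-x)) := by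
  obtain ⟨hFc, -, hFacg, hFd⟩ := hF
  have hneg : ∀ x ∈ Icc (-b) (-a), -x ∈ Icc a b := fun x hx => by simpa [← neg_Icc] using hx
  refine ⟨continuousOn_const.sub (hFc.comp continuousOn_neg hneg), by simp, ?_, ?_⟩
  · have := hFacg.comp_neg
    rw [neg_Icc] at this
    exact this.of_abs_sub_eq le_rfl le_rfl fun x _ y _ => by
      rw [sub_sub_sub_cancel_left, abs_sub_comm]
  · rw [ae_restrict_iff' measurableSet_Icc] at hFd ⊢
    filter_upwards [(Measure.measurePreserving_neg volume).quasiMeasurePreserving.ae hFd]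
      with x hx hxI
    simpa using ((hx (hneg x hxI)).scomp x (hasDerivAt_neg x)).const_sub (F b)

end HasDenjoyIntegralFn

section DenjoyIntegral

variable {a b L : ℝ} {f F : ℝ → ℝ}

theorem denjoyIntegrable_comp_neg_iff :
    DenjoyIntegrable (-b) (-a) (fun x => f (-x)) ↔ DenjoyIntegrable a b f := by
  refine ⟨fun ⟨G, hG⟩ => ?_, fun ⟨F, hF⟩ => ⟨_, hF.comp_neg⟩⟩
  have := hG.comp_neg
  simp only [neg_neg] at this
  exact ⟨_, this⟩

theorem denjoyIntegral_comp_neg (hab : a ≤ b) :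
    denjoyIntegral (-b) (-a) (fun x => f (-x)) = denjoyIntegral a b f := by
  by_cases h : DenjoyIntegrable a b f
  · obtain ⟨F, hF⟩ := h
    rw [hF.comp_neg.denjoyIntegral_eq (neg_le_neg hab), hF.denjoyIntegral_eq hab, neg_neg, hF.2.1,
      sub_zero]
  · rw [denjoyIntegral, denjoyIntegral, dif_neg h, dif_neg (mt denjoyIntegrable_comp_neg_iff.1 h)]

theorem tendsto_denjoyIntegral_nhdsLT_iff_comp_neg (hab : a < b) {l : Filter ℝ} :
    Tendsto (fun c => denjoyIntegral a c f) (𝓝[<] b) l ↔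
      Tendsto (fun c => denjoyIntegral c (-a) (fun x => f (-x))) (𝓝[>] (-b)) l := by
  constructor <;> intro h
  · refine (h.comp tendsto_neg_nhdsGT_neg).congr' ?_
    filter_upwards [Ioo_mem_nhdsGT (neg_lt_neg hab)] with c hc
    simpa using (denjoyIntegral_comp_neg (a := a) (b := -c) (f := f) (by linarith [hc.2])).symm
  · refine (h.comp tendsto_neg_nhdsLT).congr' ?_
    filter_upwards [Ioo_mem_nhdsLT hab] with c hc
    exact denjoyIntegral_comp_neg hc.1.le

theorem HasDenjoyIntegralFn.tendsto_denjoyIntegral_nhdsGT (hF : HasDenjoyIntegralFn a b f F)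
    (hab : a < b) : Tendsto (fun c => denjoyIntegral c b f) (𝓝[>] a) (𝓝 (F b)) := by
  have hFa : Tendsto F (𝓝[>] a) (𝓝 0) := by
    rw [← nhdsWithin_Ioo_eq_nhdsGT hab, ← hF.2.1]
    exact (hF.1 a (left_mem_Icc.2 hab.le)).tendsto.mono_left (nhdsWithin_mono a Ioo_subset_Icc_self)
  have := (tendsto_const_nhds (x := F b)).sub hFa
  rw [sub_zero] at this
  refine this.congr' ?_
  filter_upwards [Ioo_mem_nhdsGT hab] with c hc
  exact (hF.denjoyIntegral_eq_sub hc.1.le hc.2.le le_rfl).symm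

theorem hasDenjoyIntegralFn_of_continuousWithinAt_of_forall_Ioo {G : ℝ → ℝ} (hab : a < b)
    (hG : ∀ c ∈ Ioo a b, HasDenjoyIntegralFn c b f (fun x => G x - G c))
    (hGa : G a = 0) (hcont : ContinuousWithinAt G (Icc a b) a) : HasDenjoyIntegralFn a b f G := by
  have hGc : ∀ c ∈ Ioo a b, ContinuousOn G (Icc c b) := fun c hc =>
    ((hG c hc).1.add continuousOn_const).congr fun x _ => (sub_add_cancel (G x) (G c)).symm
  obtain ⟨u, -, hu, hua⟩ := exists_seq_strictAnti_tendsto' hab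
  have hcover : Icc a b = insert a (⋃ n, Icc (u n) b) := by
    refine Subset.antisymm (fun x hx => ?_) (insert_subset (left_mem_Icc.2 hab.le)
      (iUnion_subset fun n => Icc_subset_Icc_left (hu n).1.le))
    rcases hx.1.eq_or_lt with rfl | hax
    · exact mem_insert _ _
    · obtain ⟨n, hn⟩ := (hua.eventually (gt_mem_nhds hax)).exists
      exact mem_insert_of_mem _ (mem_iUnion.2 ⟨n, hn.le, hx.2⟩)
  refine ⟨fun x hx => ?_, hGa, ?_, ?_⟩
  · rcases hx.1.eq_or_lt with rfl | hax
    · exact hcont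
    obtain ⟨c, hac, hcx⟩ := exists_between hax
    exact (hGc c ⟨hac, hcx.trans_le hx.2⟩ x ⟨hcx.le, hx.2⟩).mono_of_mem_nhdsWithin
      (mem_nhdsWithin.2 ⟨Ioi c, isOpen_Ioi, hcx, fun y hy => ⟨hy.1.le, hy.2.2⟩⟩)
  · rw [hcover, insert_eq]
    refine ((acStar_singleton a b a G).acgStar isClosed_singleton
      (singleton_subset_iff.2 (left_mem_Icc.2 hab.le))).union (acgStar_iUnion fun n => ?_)
    refine (hG (u n) (hu n)).2.2.1.of_abs_sub_eq (hu n).1.le le_rfl fun x _ y _ => ?_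
    rw [sub_sub_sub_cancel_right]
  · rw [Measure.restrict_congr_set (hcover ▸ insert_ae_eq_self a _), ae_restrict_iUnion_iff]
    exact fun n => (hG (u n) (hu n)).2.2.2.mono fun x hx => (hasDerivAt_sub_const_iff _).1 hx

theorem denjoyIntegrable_and_denjoyIntegral_eq_iff_tendsto_nhdsGT (hab : a < b)
    (hc : ∀ c ∈ Ioo a b, DenjoyIntegrable c b f) :
    (DenjoyIntegrable a b f ∧ denjoyIntegral a b f = L) ↔
      Tendsto (fun c => denjoyIntegral c b f) (𝓝[>] a) (𝓝 L) := by
  refine ⟨fun ⟨⟨F, hF⟩, hL⟩ => ?_, fun hT => ?_⟩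
  · rw [← hL, hF.denjoyIntegral_eq hab.le]
    exact hF.tendsto_denjoyIntegral_nhdsGT hab
  choose! Fc hFc using hc
  -- `G a` is set by hand: `denjoyIntegral a b f` is not yet known to be `L`.
  set G : ℝ → ℝ := fun x => if x = a then 0 else L - denjoyIntegral x b f
  have hGx : ∀ x, a < x → G x = L - denjoyIntegral x b f := fun x hx => if_neg hx.ne'
  have hpiece : ∀ c ∈ Ioo a b, HasDenjoyIntegralFn c b f (fun x => G x - G c) := by
    intro c hc
    refine (hFc c hc).congr hc.2.le fun x hx => ?_
    rw [hGx x (hc.1.trans_le hx.1), hGx c hc.1, (hFc c hc).denjoyIntegral_eq_sub hx.1 hx.2 le_rfl,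
      (hFc c hc).denjoyIntegral_eq_sub le_rfl hc.2.le le_rfl, (hFc c hc).2.1]
    ring
  have hcont : ContinuousWithinAt G (Icc a b) a := by
    refine (continuousWithinAt_Ioi_iff_Ici.1 ?_).mono Icc_subset_Ici_self
    have : Tendsto (fun x => L - denjoyIntegral x b f) (𝓝[>] a) (𝓝 (G a)) := by
      simpa [G] using (tendsto_const_nhds (x := L)).sub hT
    exact this.congr' (eventually_nhdsWithin_of_forall fun x hx => (hGx x hx).symm)
  have hG := hasDenjoyIntegralFn_of_continuousWithinAt_of_forall_Ioo hab hpiece (if_pos rfl) hcont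
  obtain ⟨c, hc⟩ := exists_between hab
  refine ⟨⟨G, hG⟩, ?_⟩
  rw [hG.denjoyIntegral_eq hab.le, hGx b hab,
    (hFc c hc).denjoyIntegral_eq_sub hc.2.le le_rfl le_rfl, sub_self, sub_zero]

end DenjoyIntegral

theorem improper_integrals_lemma_general (a b L : ℝ) (hab : a < b) (f : ℝ → ℝ) :
    ((∀ c ∈ Ioo a b, DenjoyIntegrable c b f) →
      ((DenjoyIntegrable a b f ∧ denjoyIntegral a b f = L) ↔
        Tendsto (fun c => denjoyIntegral c b f) (nhdsWithin a (Ioi a)) (nhds L))) ∧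
    ((∀ c ∈ Ioo a b, DenjoyIntegrable a c f) →
      ((DenjoyIntegrable a b f ∧ denjoyIntegral a b f = L) ↔
        Tendsto (fun c => denjoyIntegral a c f) (nhdsWithin b (Iio b)) (nhds L))) := by
  refine ⟨denjoyIntegrable_and_denjoyIntegral_eq_iff_tendsto_nhdsGT hab, fun hc => ?_⟩
  have hc' : ∀ c ∈ Ioo (-b) (-a), DenjoyIntegrable c (-a) (fun x => f (-x)) := fun c hc' => by
    simpa using denjoyIntegrable_comp_neg_iff.2 (hc (-c) ⟨by linarith [hc'.2], by linarith [hc'.1]⟩)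
  rw [← denjoyIntegrable_comp_neg_iff, ← denjoyIntegral_comp_neg hab.le,
    tendsto_denjoyIntegral_nhdsLT_iff_comp_neg hab]
  exact denjoyIntegrable_and_denjoyIntegral_eq_iff_tendsto_nhdsGT (neg_lt_neg hab) hc'

/-- The Improper Integrals Lemma. -/
theorem improper_integrals_lemma (a b L : ℝ) (hab : a < b) (f : ℝ → ℝ)
    (hf : Measurable f) :
    ((∀ c ∈ Ioo a b, DenjoyIntegrable c b f) →
      ((DenjoyIntegrable a b f ∧ denjoyIntegral a b f = L) ↔
        Tendsto (fun c => denjoyIntegral c b f) (nhdsWithin a (Ioi a)) (nhds L))) ∧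
    ((∀ c ∈ Ioo a b, DenjoyIntegrable a c f) →
      ((DenjoyIntegrable a b f ∧ denjoyIntegral a b f = L) ↔
        Tendsto (fun c => denjoyIntegral a c f) (nhdsWithin b (Iio b)) (nhds L))) :=
  improper_integrals_lemma_general a b L hab f
end
end

section
/- Suppose f:[a,b]→ℝ is measurable and K ⊆ [a,b] is closed. (i) If D_f(K) = ∅ then f·χ_K is Lebesgue integrable on [a,b]. (ii) For any open interval (p,q), one has (p,q) ∩ D_f(K) = ∅ if and only if for all rationals r<s with [r,s] ⊆ (p,q), the function f·χ_{[r,s]∩K} is Lebesgue integrable on [a,b]. -/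
open MeasureTheory Set Filter

noncomputable section

attribute [local instance] Classical.propDecidable

/-- The derivative `D_f(K)`: points of `K` at which `f` is not locally Lebesgue integrable
relative to `K`. -/
def Df (f : ℝ → ℝ) (K : Set ℝ) : Set ℝ :=
  {x ∈ K | ∀ c d : ℝ, c < x → x < d → ¬ IntegrableOn f (Icc c d ∩ K) volume}

/-- The derivative `D_F(K)`: points of `K` at which `F` is not locally `AC_*` relative to `K`. -/
def DF (a b : ℝ) (F : ℝ → ℝ) (K : Set ℝ) : Set ℝ :=
  {x ∈ K | ∀ c d : ℝ, c < x → x < d → ¬ ACStar a b F (Icc c d ∩ K)}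

/-- The derivative `D_{f,F}(K) = D_f(K) ∪ D_F(K)`. -/
def DfF (a b : ℝ) (f F : ℝ → ℝ) (K : Set ℝ) : Set ℝ := Df f K ∪ DF a b F K

/-- Transfinite iterates of a derivative operation on sets:
`D⁰(K) = K`, `D^(α+1)(K) = D(D^α(K))`, and `D^α(K) = ⋂_(β<α) D^β(K)` for limit `α`. -/
def derivIter (D : Set ℝ → Set ℝ) (K : Set ℝ) (α : Ordinal.{0}) : Set ℝ :=
  Ordinal.limitRecOn α K (fun _ ih => D ih) (fun o _ ih => ⋂ β : Iio o, ih β.1 β.2)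

/-- `D^∞(K) = ⋂_(α<ω₁) D^α(K)`. -/
def derivInfty (D : Set ℝ → Set ℝ) (K : Set ℝ) : Set ℝ :=
  ⋂ (α : Ordinal.{0}) (_ : α.card ≤ Cardinal.aleph0), derivIter D K α


lemma key_integrable (f : ℝ → ℝ) (K S : Set ℝ) (hS : IsCompact S)
    (h : ∀ x ∈ S, ∃ c d : ℝ, c < x ∧ x < d ∧ IntegrableOn f (Icc c d ∩ K) volume) :
    IntegrableOn f (S ∩ K) volume := by
  choose! c d hc hd hint using h
  set U : ℝ → Set ℝ := fun x => if x ∈ S then Ioo (c x) (d x) else univ with hU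
  obtain ⟨t, htS, hcov⟩ := hS.elim_nhds_subcover U (by
    intro x hx
    simp only [hU, if_pos hx]
    exact Ioo_mem_nhds (hc x hx) (hd x hx))
  have hint2 : IntegrableOn f (⋃ x ∈ t, U x ∩ K) volume := by
    rw [integrableOn_finset_iUnion]
    intro x hx
    have hxS := htS x hx
    have : U x ∩ K ⊆ Icc (c x) (d x) ∩ K := by
      simp only [hU, if_pos hxS]
      exact inter_subset_inter_left _ Ioo_subset_Icc_self
    exact (hint x hxS).mono_set this
  refine hint2.mono_set ?_
  rintro y ⟨hyS, hyK⟩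
  obtain ⟨x, hxt, hyU⟩ := mem_iUnion₂.1 (hcov hyS)
  exact mem_iUnion₂.2 ⟨x, hxt, hyU, hyK⟩

theorem Df_empty_integrable (a b : ℝ) (hab : a < b) (f : ℝ → ℝ) (hf : Measurable f)
    (K : Set ℝ) (hK : IsClosed K) (hKsub : K ⊆ Icc a b) :
    (Df f K = ∅ → IntegrableOn f K volume) ∧
    (∀ p q : ℝ, Ioo p q ∩ Df f K = ∅ ↔
      ∀ r s : ℚ, (r:ℝ) < (s:ℝ) → Icc (r:ℝ) (s:ℝ) ⊆ Ioo p q →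
        IntegrableOn f (Icc (r:ℝ) (s:ℝ) ∩ K) volume) := by
  have hKcpt : IsCompact K := isCompact_Icc.of_isClosed_subset hK hKsub
  constructor
  · intro hDf
    have : IntegrableOn f (K ∩ K) volume := by
      apply key_integrable f K K hKcpt
      intro x hx
      have hx' : x ∉ Df f K := by rw [hDf]; exact notMem_empty x
      simp only [Df, mem_sep_iff, not_and] at hx'
      have := hx' hx
      push_neg at this
      exact this
    simpa using this
  · intro p q
    constructor
    · intro hemp r s hrs hsub
      have hScpt : IsCompact (Icc (r:ℝ) (s:ℝ) ∩ K) := isCompact_Icc.inter_right hK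
      have : IntegrableOn f ((Icc (r:ℝ) (s:ℝ) ∩ K) ∩ K) volume := by
        apply key_integrable f K _ hScpt
        rintro x ⟨hxI, hxK⟩
        have hx' : x ∉ Df f K := fun hd =>
          (notMem_empty x) (hemp ▸ mem_inter (hsub hxI) hd)
        simp only [Df, mem_sep_iff, not_and] at hx'
        have := hx' hxK
        push_neg at this
        exact this
      simpa [inter_assoc] using this
    · intro h
      rw [eq_empty_iff_forall_notMem]
      rintro x ⟨hxpq, hxK, hxD⟩
      obtain ⟨r, hpr, hrx⟩ := exists_rat_btwn hxpq.1
      obtain ⟨s, hxs, hsq⟩ := exists_rat_btwn hxpq.2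
      have hsub : Icc (r:ℝ) (s:ℝ) ⊆ Ioo p q := fun y hy =>
        ⟨lt_of_lt_of_le hpr hy.1, lt_of_le_of_lt hy.2 hsq⟩
      exact hxD r s hrx hxs (h r s (hrx.trans hxs) hsub)
end
end
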